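/- Let λ be an F-invariant probability measure on ℝ^{2p} and π a probability measure with π = λ on the σ-field G of F-invariant Borel sets. Then λ = 2^{-p} Σ_{f ∈ F} π ∘ f⁻¹. -/

import Mathlib

/-!
For measurable `A`, the number of swaps `f_S` with `f_S x ∈ A` is a function of `x` that is
invariant under every swap, since `f_S ∘ f_T = f_{S ∆ T}` and `S ↦ S ∆ T` permutes the index set.
Its level sets are invariant Borel sets, so it has the same integral under `π` and `λ`; these
integrals are `∑_S π (f_S⁻¹ A)` and `∑_S λ (f_S⁻¹ A) = 2^p λ(A)`, the latter by invariance of `λ`.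
-/

open MeasureTheory Set ENNReal

/-- The swap map `f_S` on `ℝ^p × ℝ^p`. -/
noncomputable def swapMap (p : ℕ) (S : Finset (Fin p)) :
    ((Fin p → ℝ) × (Fin p → ℝ)) → ((Fin p → ℝ) × (Fin p → ℝ)) :=
  fun z => (fun i => if i ∈ S then z.2 i else z.1 i,
            fun i => if i ∈ S then z.1 i else z.2 i)

theorem lintegral_eq_of_measure_preimage_eq {α : Type*} [MeasurableSpace α] {μ ν : Measure α}
    {g : α → ℝ≥0∞} (hg : Measurable g)
    (h : ∀ s, MeasurableSet s → μ (g ⁻¹' s) = ν (g ⁻¹' s)) :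
    ∫⁻ x, g x ∂μ = ∫⁻ x, g x ∂ν := by
  have hmap : μ.map g = ν.map g := by
    ext s hs
    rw [Measure.map_apply hg hs, Measure.map_apply hg hs, h s hs]
  calc ∫⁻ x, g x ∂μ = ∫⁻ y, y ∂μ.map g := (lintegral_map measurable_id hg).symm
    _ = ∫⁻ y, y ∂ν.map g := by rw [hmap]
    _ = ∫⁻ x, g x ∂ν := lintegral_map measurable_id hg

section OrbitCount

variable {α ι : Type*} [Fintype ι] (f : ι → α → α)

/-- `orbitCount f A x / card ι` is the mass that the orbit measure `μ_x` gives to `A`. -/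
noncomputable def orbitCount (A : Set α) (x : α) : ℝ≥0∞ :=
  ∑ i, A.indicator 1 (f i x)

theorem orbitCount_apply_comp {A : Set α} {j : ι} {e : ι ≃ ι} (he : ∀ i, f i ∘ f j = f (e i))
    (x : α) : orbitCount f A (f j x) = orbitCount f A x := by
  simp only [orbitCount, ← Function.comp_apply (f := f _) (g := f j), he]
  exact e.sum_comp fun i => A.indicator 1 (f i x)

variable {f} [MeasurableSpace α]

theorem measurable_orbitCount (hf : ∀ i, Measurable (f i)) {A : Set α} (hA : MeasurableSet A) :
    Measurable (orbitCount f A) :=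
  Finset.measurable_sum _ fun i _ => (measurable_const.indicator hA).comp (hf i)

theorem lintegral_orbitCount (hf : ∀ i, Measurable (f i)) {A : Set α} (hA : MeasurableSet A)
    (μ : Measure α) : ∫⁻ x, orbitCount f A x ∂μ = ∑ i, μ (f i ⁻¹' A) := by
  simp only [orbitCount]
  rw [lintegral_finsetSum (f := fun i x => A.indicator 1 (f i x)) _ fun i _ =>
    (measurable_one.indicator hA).comp (hf i)]
  refine Finset.sum_congr rfl fun i _ => ?_
  rw [← lintegral_indicator_one (hA.preimage (hf i))]
  rfl

theorem sum_measure_preimage_eq_of_eq_on_invariant (hf : ∀ i, Measurable (f i))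
    (hcomp : ∀ j, ∃ e : ι ≃ ι, ∀ i, f i ∘ f j = f (e i)) {μ ν : Measure α}
    (h : ∀ s, MeasurableSet s → (∀ j, f j ⁻¹' s = s) → μ s = ν s)
    {A : Set α} (hA : MeasurableSet A) :
    ∑ i, μ (f i ⁻¹' A) = ∑ i, ν (f i ⁻¹' A) := by
  have hinvariant : ∀ j, orbitCount f A ∘ f j = orbitCount f A := fun j => by
    obtain ⟨e, he⟩ := hcomp j
    exact funext (orbitCount_apply_comp f he)
  rw [← lintegral_orbitCount hf hA, ← lintegral_orbitCount hf hA]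
  refine lintegral_eq_of_measure_preimage_eq (measurable_orbitCount hf hA) fun s hs => ?_
  refine h _ (measurable_orbitCount hf hA hs) fun j => ?_
  rw [← preimage_comp, hinvariant j]

end OrbitCount

theorem measurable_swapMap (p : ℕ) (S : Finset (Fin p)) : Measurable (swapMap p S) := by
  refine Measurable.prod (measurable_pi_lambda _ fun i => ?_) (measurable_pi_lambda _ fun i => ?_)
  all_goals
    by_cases h : i ∈ S <;> simp only [swapMap, h, if_true, if_false] <;> fun_prop

theorem swapMap_comp_swapMap (p : ℕ) (S T : Finset (Fin p)) :
    swapMap p S ∘ swapMap p T = swapMap p (symmDiff S T) := by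
  funext z
  refine Prod.ext (funext fun i => ?_) (funext fun i => ?_) <;>
    by_cases hS : i ∈ S <;> by_cases hT : i ∈ T <;>
    simp [swapMap, hS, hT, Finset.mem_symmDiff]

theorem agree_on_invariant_implies_average_general (p : ℕ)
    (lam π : Measure ((Fin p → ℝ) × (Fin p → ℝ)))
    (hinv : ∀ S : Finset (Fin p), lam.map (swapMap p S) = lam)
    (hagree : ∀ A : Set ((Fin p → ℝ) × (Fin p → ℝ)), MeasurableSet A →
      (∀ S : Finset (Fin p), swapMap p S ⁻¹' A = A) → π A = lam A) :
    lam = ((2 : ℝ≥0∞) ^ p)⁻¹ • ∑ S : Finset (Fin p), π.map (swapMap p S) := by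
  ext A hA
  have hcomp (T : Finset (Fin p)) :
      ∃ e : Finset (Fin p) ≃ Finset (Fin p), ∀ S, swapMap p S ∘ swapMap p T = swapMap p (e S) :=
    ⟨(symmDiff_left_involutive T).toPerm, (swapMap_comp_swapMap p · T)⟩
  have hlam (S : Finset (Fin p)) : lam (swapMap p S ⁻¹' A) = lam A := by
    rw [← Measure.map_apply (measurable_swapMap p S) hA, hinv S]
  calc lam A = ((2 : ℝ≥0∞) ^ p)⁻¹ * ∑ _S : Finset (Fin p), lam A := by
        rw [Finset.sum_const, Finset.card_univ, Fintype.card_finset, Fintype.card_fin,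
          nsmul_eq_mul, Nat.cast_pow, Nat.cast_ofNat, ← mul_assoc,
          ENNReal.inv_mul_cancel (by positivity) (by finiteness), one_mul]
    _ = ((2 : ℝ≥0∞) ^ p)⁻¹ * ∑ S, π (swapMap p S ⁻¹' A) := by
        rw [sum_measure_preimage_eq_of_eq_on_invariant (measurable_swapMap p) hcomp hagree hA]
        simp only [hlam]
    _ = _ := by
        simp only [Measure.smul_apply, Measure.finsetSum_apply, smul_eq_mul,
          Measure.map_apply (measurable_swapMap p _) hA]

/-- If `λ` is `F`-invariant and `π = λ` on the σ-field `G` of `F`-invariant Borel sets,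
then `λ = 2^{-p} ∑_{f ∈ F} π ∘ f⁻¹`. -/
theorem agree_on_invariant_implies_average (p : ℕ) (hp : 2 ≤ p)
    (lam π : Measure ((Fin p → ℝ) × (Fin p → ℝ)))
    [IsProbabilityMeasure lam] [IsProbabilityMeasure π]
    (hinv : ∀ S : Finset (Fin p), lam.map (swapMap p S) = lam)
    (hagree : ∀ A : Set ((Fin p → ℝ) × (Fin p → ℝ)), MeasurableSet A →
      (∀ S : Finset (Fin p), swapMap p S ⁻¹' A = A) → π A = lam A) :
    lam = ((2 : ℝ≥0∞) ^ p)⁻¹ • ∑ S : Finset (Fin p), π.map (swapMap p S) :=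
  agree_on_invariant_implies_average_general p lam π hinv hagree
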